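/- arXiv:1509.08519 — 2 statements merged into one kernel-verified Lean document; each statement's English description precedes it below -/
import Mathlib

section
/- (Main Lemma) For all real numbers a, b, c, d and all real parameters r, s, u, v, the expression ψ(a,b,c,d) := [a²λ_r + 2ab·λ_{(r+s)/2} + b²λ_s]·[c²λ_u + 2cd·λ_{(u+v)/2} + d²λ_v] − [ac·λ_{(r+u)/2} + ad·λ_{(r+v)/2} + bc·λ_{(s+u)/2} + bd·λ_{(s+v)/2}]² is nonnegative: ψ(a,b,c,d) ≥ 0. -/
/-!
With `m = E[X]`, `λ_q` is the Jensen gap `E[Φ_q(X)] - Φ_q(m)` of the convex potential `Φ_q`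
with `Φ_q''(t) = t ^ (q - 2)`, i.e. the mean of the Bregman divergence `D_q(m, X)`. Taylor's
formula with integral remainder gives `D_q(m, x) = ∫ t in m..x, (x - t) * t ^ (q - 2)`, hence
`∑ i j, c i * c j * λ_{(p i + p j) / 2}`
`  = E[∫ t in m..X, (X - t) * (∑ i, c i * t ^ (p i / 2 - 1)) ^ 2] ≥ 0`:
the kernel `(p, q) ↦ λ_{(p + q) / 2}` is positive semidefinite, and `ψ ≥ 0` is the
Cauchy–Schwarz inequality for the quadratic form it defines.
-/

open MeasureTheory

/-- The moment difference `λ_s(X)` of a positive random variable `X`. -/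
noncomputable def momentLambda {Ω : Type*} [MeasurableSpace Ω] (μ : Measure Ω) (X : Ω → ℝ)
    (s : ℝ) : ℝ :=
  if s = 0 then Real.log (∫ ω, X ω ∂μ) - ∫ ω, Real.log (X ω) ∂μ
  else if s = 1 then (∫ ω, X ω * Real.log (X ω) ∂μ) - (∫ ω, X ω ∂μ) * Real.log (∫ ω, X ω ∂μ)
  else ((∫ ω, X ω ^ s ∂μ) - (∫ ω, X ω ∂μ) ^ s) / (s * (s - 1))

open Set

theorem integral_sub_mul_eq_taylor {f f' f'' : ℝ → ℝ} {a b : ℝ}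
    (hf : ∀ t ∈ uIcc a b, HasDerivAt f (f' t) t)
    (hf' : ∀ t ∈ uIcc a b, HasDerivAt f' (f'' t) t)
    (hf'' : IntervalIntegrable f'' volume a b) :
    ∫ t in a..b, (b - t) * f'' t = f b - f a - f' a * (b - a) := by
  have hF : ∀ t ∈ uIcc a b,
      HasDerivAt (fun t => (b - t) * f' t + f t) ((b - t) * f'' t) t := fun t ht =>
    ((((hasDerivAt_id' t).const_sub b).mul (hf' t ht)).add (hf t ht)).congr_deriv (by ring)
  rw [intervalIntegral.integral_eq_sub_of_hasDerivAt hF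
    (hf''.continuousOn_mul (continuousOn_const.sub continuousOn_id))]
  ring

theorem integral_sub_mul_nonneg {g : ℝ → ℝ} {a b : ℝ} (hg : ∀ t ∈ uIcc a b, 0 ≤ g t) :
    0 ≤ ∫ t in a..b, (b - t) * g t := by
  rcases le_total a b with hab | hba
  · refine intervalIntegral.integral_nonneg hab fun t ht => ?_
    exact mul_nonneg (sub_nonneg.2 ht.2) (hg t (Icc_subset_uIcc ht))
  · rw [intervalIntegral.integral_symm, ← intervalIntegral.integral_neg]
    refine intervalIntegral.integral_nonneg hba fun t ht => ?_
    rw [← neg_mul, neg_sub]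
    exact mul_nonneg (sub_nonneg.2 ht.1) (hg t (Icc_subset_uIcc' ht))

noncomputable def powPotential (q t : ℝ) : ℝ :=
  if q = 0 then -Real.log t else if q = 1 then t * Real.log t else t ^ q / (q * (q - 1))

noncomputable def powPotentialDeriv (q t : ℝ) : ℝ :=
  if q = 0 then -t⁻¹ else if q = 1 then Real.log t + 1 else t ^ (q - 1) / (q - 1)

noncomputable def powBregman (q m x : ℝ) : ℝ :=
  powPotential q x - powPotential q m - powPotentialDeriv q m * (x - m)

theorem hasDerivAt_powPotential (q : ℝ) {t : ℝ} (ht : 0 < t) :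
    HasDerivAt (powPotential q) (powPotentialDeriv q t) t := by
  unfold powPotential powPotentialDeriv
  split_ifs with h0 h1
  · exact (Real.hasDerivAt_log ht.ne').neg
  · exact ((hasDerivAt_id' t).mul (Real.hasDerivAt_log ht.ne')).congr_deriv (by field_simp)
  · refine ((Real.hasDerivAt_rpow_const (Or.inl ht.ne')).div_const (q * (q - 1))).congr_deriv ?_
    field_simp [sub_ne_zero.2 h1]

theorem hasDerivAt_powPotentialDeriv (q : ℝ) {t : ℝ} (ht : 0 < t) :
    HasDerivAt (powPotentialDeriv q) (t ^ (q - 2)) t := by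
  unfold powPotentialDeriv
  split_ifs with h0 h1
  · refine (hasDerivAt_inv ht.ne').neg.congr_deriv ?_
    rw [h0, neg_neg, zero_sub, Real.rpow_neg ht.le, ← Real.rpow_natCast]; norm_num
  · refine ((Real.hasDerivAt_log ht.ne').add_const 1).congr_deriv ?_
    norm_num [h1, Real.rpow_neg_one]
  · refine ((Real.hasDerivAt_rpow_const (Or.inl ht.ne')).div_const (q - 1)).congr_deriv ?_
    field_simp [sub_ne_zero.2 h1]
    ring_nf

theorem powBregman_eq_integral {q m x : ℝ} (hm : 0 < m) (hx : 0 < x) :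
    powBregman q m x = ∫ t in m..x, (x - t) * t ^ (q - 2) := by
  have hpos : ∀ t ∈ uIcc m x, 0 < t := fun t ht =>
    lt_of_lt_of_le (lt_min hm hx) ht.1
  exact (integral_sub_mul_eq_taylor (fun t ht => hasDerivAt_powPotential q (hpos t ht))
    (fun t ht => hasDerivAt_powPotentialDeriv q (hpos t ht))
    (intervalIntegral.intervalIntegrable_rpow (Or.inr fun h => (hpos 0 h).false))).symm

theorem sum_mul_powBregman_nonneg {ι : Type*} [Fintype ι] {m x : ℝ} (hm : 0 < m) (hx : 0 < x)
    (c p : ι → ℝ) :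
    0 ≤ ∑ i, ∑ j, c i * c j * powBregman ((p i + p j) / 2) m x := by
  have hpos : ∀ t ∈ uIcc m x, 0 < t := fun t ht => lt_of_lt_of_le (lt_min hm hx) ht.1
  have hint : ∀ i j, IntervalIntegrable
      (fun t => c i * c j * ((x - t) * t ^ ((p i + p j) / 2 - 2))) volume m x := fun i j =>
    ((intervalIntegral.intervalIntegrable_rpow (Or.inr fun h => (hpos 0 h).false)).continuousOn_mul
      (continuousOn_const.sub continuousOn_id)).const_mul _
  have hsq : ∀ t ∈ uIcc m x, ∑ i, ∑ j, c i * c j * ((x - t) * t ^ ((p i + p j) / 2 - 2))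
      = (x - t) * (∑ i, c i * t ^ (p i / 2 - 1)) ^ 2 := fun t ht => by
    rw [sq, Finset.sum_mul_sum, Finset.mul_sum]
    refine Finset.sum_congr rfl fun i _ => ?_
    rw [Finset.mul_sum]
    refine Finset.sum_congr rfl fun j _ => ?_
    rw [show (p i + p j) / 2 - 2 = p i / 2 - 1 + (p j / 2 - 1) by ring,
      Real.rpow_add (hpos t ht)]
    ring
  calc (0 : ℝ) ≤ ∫ t in m..x, (x - t) * (∑ i, c i * t ^ (p i / 2 - 1)) ^ 2 :=
        integral_sub_mul_nonneg fun t _ => sq_nonneg _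
    _ = ∫ t in m..x, ∑ i, ∑ j, c i * c j * ((x - t) * t ^ ((p i + p j) / 2 - 2)) :=
        (intervalIntegral.integral_congr hsq).symm
    _ = ∑ i, ∑ j, ∫ t in m..x, c i * c j * ((x - t) * t ^ ((p i + p j) / 2 - 2)) :=
        (intervalIntegral.integral_finsetSum fun i _ => by
          simpa only [Finset.sum_fn] using IntervalIntegrable.sum _ fun j _ => hint i j).trans
          (Finset.sum_congr rfl fun i _ => intervalIntegral.integral_finsetSum fun j _ => hint i j)
    _ = ∑ i, ∑ j, c i * c j * powBregman ((p i + p j) / 2) m x := by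
        simp only [powBregman_eq_integral hm hx, intervalIntegral.integral_const_mul]

theorem integral_pos_of_ae_pos {Ω : Type*} [MeasurableSpace Ω] {μ : Measure Ω} [NeZero μ]
    {f : Ω → ℝ} (hf : ∀ᵐ ω ∂μ, 0 < f ω) (hfi : Integrable f μ) : 0 < ∫ ω, f ω ∂μ := by
  rw [integral_pos_iff_support_of_nonneg_ae (hf.mono fun _ h => h.le) hfi, pos_iff_ne_zero]
  intro h0
  have hf0 : ∀ᵐ ω ∂μ, f ω = 0 := by simpa [ae_iff, Function.support] using h0
  obtain ⟨ω, hpos, hzero⟩ := (hf.and hf0).exists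
  exact hpos.ne' hzero

section Moments

variable {Ω : Type*} [MeasurableSpace Ω] {μ : Measure Ω} {X : Ω → ℝ}

theorem momentLambda_eq_integral_powPotential_sub (q : ℝ) :
    momentLambda μ X q =
      ∫ ω, powPotential q (X ω) ∂μ - powPotential q (∫ ω, X ω ∂μ) := by
  unfold momentLambda powPotential
  split_ifs
  · rw [integral_neg]; ring
  · rfl
  · rw [integral_div]; ring

variable (hmom : ∀ s : ℝ, Integrable (fun ω => X ω ^ s) μ)
  (hlog : Integrable (fun ω => Real.log (X ω)) μ)
  (hxlog : Integrable (fun ω => X ω * Real.log (X ω)) μ)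
include hmom hlog hxlog

theorem integrable_powPotential (q : ℝ) : Integrable (fun ω => powPotential q (X ω)) μ := by
  unfold powPotential
  split_ifs
  · exact hlog.neg
  · exact hxlog
  · exact (hmom q).div_const _

theorem integrable_powBregman [IsFiniteMeasure μ] (q m : ℝ) :
    Integrable (fun ω => powBregman q m (X ω)) μ :=
  ((integrable_powPotential hmom hlog hxlog q).sub (integrable_const _)).sub
    (((by simpa using hmom 1 : Integrable X μ).sub (integrable_const _)).const_mul _)

theorem momentLambda_eq_integral_powBregman [IsProbabilityMeasure μ] (q : ℝ) :
    momentLambda μ X q = ∫ ω, powBregman q (∫ ω, X ω ∂μ) (X ω) ∂μ := by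
  set m := ∫ ω, X ω ∂μ
  have hΦ := integrable_powPotential hmom hlog hxlog q
  have hX : Integrable X μ := by simpa using hmom 1
  unfold powBregman
  rw [integral_sub (hΦ.sub' (integrable_const _)) ((hX.sub' (integrable_const m)).const_mul _),
    integral_sub hΦ (integrable_const _), integral_const_mul,
    integral_sub hX (integrable_const _)]
  simp [m, momentLambda_eq_integral_powPotential_sub]

theorem sum_mul_momentLambda_nonneg [IsProbabilityMeasure μ] {ι : Type*} [Fintype ι]
    (hpos : ∀ᵐ ω ∂μ, 0 < X ω) (c p : ι → ℝ) :
    0 ≤ ∑ i, ∑ j, c i * c j * momentLambda μ X ((p i + p j) / 2) := by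
  set m := ∫ ω, X ω ∂μ
  have hm : 0 < m := integral_pos_of_ae_pos hpos (by simpa using hmom 1)
  have hint : ∀ i j, Integrable
      (fun ω => c i * c j * powBregman ((p i + p j) / 2) m (X ω)) μ := fun i j =>
    (integrable_powBregman hmom hlog hxlog _ _).const_mul _
  calc (0 : ℝ) ≤ ∫ ω, ∑ i, ∑ j, c i * c j * powBregman ((p i + p j) / 2) m (X ω) ∂μ :=
        integral_nonneg_of_ae (hpos.mono fun ω hω => sum_mul_powBregman_nonneg hm hω c p)
    _ = ∑ i, ∑ j, ∫ ω, c i * c j * powBregman ((p i + p j) / 2) m (X ω) ∂μ :=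
        (integral_finsetSum _ fun i _ => integrable_finsetSum _ fun j _ => hint i j).trans
          (Finset.sum_congr rfl fun i _ => integral_finsetSum _ fun j _ => hint i j)
    _ = _ := by
        simp only [m, integral_const_mul, ← momentLambda_eq_integral_powBregman hmom hlog hxlog]

end Moments

theorem main_lemma_psi_nonneg_general {Ω : Type*} [MeasurableSpace Ω] (μ : Measure Ω) [IsProbabilityMeasure μ]
    (X : Ω → ℝ) (hpos : ∀ᵐ ω ∂μ, 0 < X ω)
    (hmom : ∀ s : ℝ, Integrable (fun ω => X ω ^ s) μ)
    (hlog : Integrable (fun ω => Real.log (X ω)) μ)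
    (hxlog : Integrable (fun ω => X ω * Real.log (X ω)) μ)
    (a b c d r s u v : ℝ) :
    (a ^ 2 * momentLambda μ X (r) + 2 * a * b * momentLambda μ X ((r + s) / 2) + b ^ 2 * momentLambda μ X (s)) *
        (c ^ 2 * momentLambda μ X (u) + 2 * c * d * momentLambda μ X ((u + v) / 2) + d ^ 2 * momentLambda μ X (v)) -
      (a * c * momentLambda μ X ((r + u) / 2) + a * d * momentLambda μ X ((r + v) / 2) +
        b * c * momentLambda μ X ((s + u) / 2) + b * d * momentLambda μ X ((s + v) / 2)) ^ 2 ≥ 0 := by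
  set A := a ^ 2 * momentLambda μ X r + 2 * a * b * momentLambda μ X ((r + s) / 2) +
    b ^ 2 * momentLambda μ X s
  set B := a * c * momentLambda μ X ((r + u) / 2) + a * d * momentLambda μ X ((r + v) / 2) +
    b * c * momentLambda μ X ((s + u) / 2) + b * d * momentLambda μ X ((s + v) / 2)
  set C := c ^ 2 * momentLambda μ X u + 2 * c * d * momentLambda μ X ((u + v) / 2) +
    d ^ 2 * momentLambda μ X v
  have hquad : ∀ t : ℝ, 0 ≤ A * (t * t) + 2 * B * t + C := fun t => by
    have h := sum_mul_momentLambda_nonneg hmom hlog hxlog hpos ![t * a, t * b, c, d] ![r, s, u, v]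
    simp only [Fin.sum_univ_four, Matrix.cons_val_zero, Matrix.cons_val_one, Matrix.cons_val_two,
      Matrix.cons_val_three, Matrix.head_cons, Matrix.tail_cons, add_self_div_two,
      add_comm s r, add_comm u r, add_comm v r, add_comm u s, add_comm v s, add_comm v u] at h
    simp only [A, B, C]
    linear_combination h
  have hdisc := discrim_le_zero hquad
  unfold discrim at hdisc
  linarith

theorem main_lemma_psi_nonneg {Ω : Type*} [MeasurableSpace Ω] (μ : Measure Ω) [IsProbabilityMeasure μ]
    (X : Ω → ℝ) (hX : Measurable X) (hpos : ∀ᵐ ω ∂μ, 0 < X ω)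
    (hmom : ∀ s : ℝ, Integrable (fun ω => X ω ^ s) μ)
    (hlog : Integrable (fun ω => Real.log (X ω)) μ)
    (hxlog : Integrable (fun ω => X ω * Real.log (X ω)) μ)
    (a b c d r s u v : ℝ) :
    (a ^ 2 * momentLambda μ X (r) + 2 * a * b * momentLambda μ X ((r + s) / 2) + b ^ 2 * momentLambda μ X (s)) *
        (c ^ 2 * momentLambda μ X (u) + 2 * c * d * momentLambda μ X ((u + v) / 2) + d ^ 2 * momentLambda μ X (v)) -
      (a * c * momentLambda μ X ((r + u) / 2) + a * d * momentLambda μ X ((r + v) / 2) +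
        b * c * momentLambda μ X ((s + u) / 2) + b * d * momentLambda μ X ((s + v) / 2)) ^ 2 ≥ 0 :=
  main_lemma_psi_nonneg_general μ X hpos hmom hlog hxlog a b c d r s u v
end

section
/- (Theorem 5) For all real numbers r, s, u, v, one has φ(r,s;s,u)·φ(r,s;s,v) ≥ [ξ(r,s)·(ξ(s,(u+v)/2) − ξ((s+u)/2,(s+v)/2)) − (ξ(s,(r+u)/2) − ξ((r+s)/2,(s+u)/2))·(ξ(s,(r+v)/2) − ξ((r+s)/2,(s+v)/2))]², where ξ(s,t) := λ_s λ_t − (λ_{(s+t)/2})² and φ(s,t;u,v) := ξ(s,t)·ξ(u,v) − [ξ((s+u)/2,(t+v)/2) − ξ((s+v)/2,(t+u)/2)]². -/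
/-!
The function `φ_c` with `φ_c'' = x ^ (c - 2)` (`-log x`, `x log x`, `x ^ c / (c (c - 1))`) has
Jensen gap `E φ_c(X) - φ_c(EX) = λ_c`, and Taylor's formula with integral remainder along the
segment `T_θ = EX + θ (X - EX)` writes this gap as `E ∫₀¹ (1 - θ) T_θ ^ (c - 2) (X - EX)² dθ`.
Hence `λ_{(p+q)/2} = ⟪w_p, w_q⟫` in `L²(μ ⊗ dθ)` for `w_p = T_θ ^ (p/2 - 1) (X - EX) √(1 - θ)`:
`ξ` is a `2 × 2` Gram determinant and the brackets in `φ` are mixed Gram minors. Projecting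
`w_r, w_u, w_v` orthogonally to `w_s`, and then `w_u, w_v` orthogonally to the image of `w_r`,
the inequality becomes Cauchy–Schwarz for the two resulting vectors.
-/

open MeasureTheory

/-- `ξ(s,t) := λ_s λ_t - (λ_{(s+t)/2})²`. -/
noncomputable def momentXi {Ω : Type*} [MeasurableSpace Ω] (μ : Measure Ω) (X : Ω → ℝ)
    (s t : ℝ) : ℝ :=
  momentLambda μ X s * momentLambda μ X t - (momentLambda μ X ((s + t) / 2)) ^ 2

/-- `φ(s,t;u,v) := ξ(s,t)ξ(u,v) - [ξ((s+u)/2,(t+v)/2) - ξ((s+v)/2,(t+u)/2)]²`. -/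
noncomputable def momentPhi {Ω : Type*} [MeasurableSpace Ω] (μ : Measure Ω) (X : Ω → ℝ)
    (s t u v : ℝ) : ℝ :=
  momentXi μ X s t * momentXi μ X u v -
    (momentXi μ X ((s + u) / 2) ((t + v) / 2) - momentXi μ X ((s + v) / 2) ((t + u) / 2)) ^ 2

open RealInnerProductSpace

section Gram

variable {E : Type*} [NormedAddCommGroup E] [InnerProductSpace ℝ E]

def gramInner (y a c : E) : ℝ := ⟪y, y⟫ * ⟪a, c⟫ - ⟪y, a⟫ * ⟪y, c⟫

def gramProj (y a : E) : E := ⟪y, y⟫ • a - ⟪y, a⟫ • y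

@[simp]
lemma gramInner_zero_left (a c : E) : gramInner 0 a c = 0 := by simp [gramInner]

lemma inner_gramProj_gramProj (y a c : E) :
    ⟪gramProj y a, gramProj y c⟫ = ⟪y, y⟫ * gramInner y a c := by
  simp only [gramProj, gramInner, inner_sub_left, inner_sub_right, inner_smul_left,
    inner_smul_right, real_inner_comm a y, RCLike.conj_to_real]
  ring

lemma sq_gramInner_le (y a c : E) :
    gramInner y a c ^ 2 ≤ gramInner y a a * gramInner y c c := by
  rcases eq_or_ne y 0 with rfl | hy
  · simp
  have h := real_inner_mul_inner_self_le (gramProj y a) (gramProj y c)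
  simp only [inner_gramProj_gramProj] at h
  refine le_of_mul_le_mul_left ?_ (pow_pos (real_inner_self_pos.2 hy) 2)
  linarith

lemma gramInner_gramProj (y a c d : E) :
    gramInner (gramProj y a) (gramProj y c) (gramProj y d) =
      ⟪y, y⟫ ^ 2 * (gramInner y a a * gramInner y c d - gramInner y a c * gramInner y a d) := by
  simp only [gramInner.eq_1 (gramProj y a), inner_gramProj_gramProj]
  ring

lemma sq_gramInner_sub_le (y a c d : E) :
    (gramInner y a a * gramInner y c d - gramInner y a c * gramInner y a d) ^ 2 ≤
      (gramInner y a a * gramInner y c c - gramInner y a c ^ 2) *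
        (gramInner y a a * gramInner y d d - gramInner y a d ^ 2) := by
  rcases eq_or_ne y 0 with rfl | hy
  · simp
  have h := sq_gramInner_le (gramProj y a) (gramProj y c) (gramProj y d)
  simp only [gramInner_gramProj] at h
  refine le_of_mul_le_mul_left ?_ (pow_pos (real_inner_self_pos.2 hy) 4)
  linarith

end Gram

section GramRepresentation

variable {Ω : Type*} [MeasurableSpace Ω] (μ : Measure Ω) (X : Ω → ℝ)

lemma momentXi_sub_momentXi_of_add_eq {a b c d : ℝ} (h : a + b = c + d) :
    momentXi μ X a b - momentXi μ X c d =
      momentLambda μ X a * momentLambda μ X b - momentLambda μ X c * momentLambda μ X d := by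
  rw [momentXi, momentXi, h]
  ring

lemma momentPhi_eq (s t u v : ℝ) :
    momentPhi μ X s t u v = momentXi μ X s t * momentXi μ X u v -
      (momentLambda μ X ((s + u) / 2) * momentLambda μ X ((t + v) / 2) -
        momentLambda μ X ((s + v) / 2) * momentLambda μ X ((t + u) / 2)) ^ 2 := by
  rw [momentPhi, momentXi_sub_momentXi_of_add_eq μ X (by ring)]

variable {E : Type*} [NormedAddCommGroup E] [InnerProductSpace ℝ E]

theorem momentPhi_mul_momentPhi_ge_of_inner (W : ℝ → E)
    (hW : ∀ p q, momentLambda μ X ((p + q) / 2) = ⟪W p, W q⟫) (r s u v : ℝ) :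
    momentPhi μ X r s s u * momentPhi μ X r s s v ≥
      (momentXi μ X r s *
          (momentXi μ X s ((u + v) / 2) - momentXi μ X ((s + u) / 2) ((s + v) / 2)) -
        (momentXi μ X s ((r + u) / 2) - momentXi μ X ((r + s) / 2) ((s + u) / 2)) *
          (momentXi μ X s ((r + v) / 2) - momentXi μ X ((r + s) / 2) ((s + v) / 2))) ^ 2 := by
  have hdiag : ∀ p, momentLambda μ X p = ⟪W p, W p⟫ := fun p => by simpa using hW p p
  rw [momentPhi_eq, momentPhi_eq, momentXi_sub_momentXi_of_add_eq μ X (by ring),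
    momentXi_sub_momentXi_of_add_eq μ X (by ring), momentXi_sub_momentXi_of_add_eq μ X (by ring)]
  simp only [momentXi, hW]
  simp only [hdiag]
  have key := sq_gramInner_sub_le (W s) (W r) (W u) (W v)
  simp only [gramInner, real_inner_comm] at key ⊢
  linarith

end GramRepresentation

section PowerPotential

open Real Set

noncomputable def powerPotential (c x : ℝ) : ℝ :=
  if c = 0 then -log x else if c = 1 then x * log x else x ^ c / (c * (c - 1))

noncomputable def powerPotentialDeriv (c x : ℝ) : ℝ :=
  if c = 0 then -x⁻¹ else if c = 1 then log x + 1 else x ^ (c - 1) / (c - 1)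

lemma hasDerivAt_powerPotential (c : ℝ) {x : ℝ} (hx : 0 < x) :
    HasDerivAt (powerPotential c) (powerPotentialDeriv c x) x := by
  rcases eq_or_ne c 0 with rfl | hc0
  · have h : powerPotential 0 = fun y => -log y := by funext y; simp [powerPotential]
    rw [h, powerPotentialDeriv, if_pos rfl]
    exact (hasDerivAt_log hx.ne').neg
  rcases eq_or_ne c 1 with rfl | hc1
  · have h : powerPotential 1 = fun y => y * log y := by funext y; simp [powerPotential]
    rw [h, powerPotentialDeriv, if_neg one_ne_zero, if_pos rfl]
    exact hasDerivAt_mul_log hx.ne'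
  have h : powerPotential c = fun y => y ^ c / (c * (c - 1)) := by
    funext y; simp [powerPotential, hc0, hc1]
  rw [h, powerPotentialDeriv, if_neg hc0, if_neg hc1]
  refine ((hasDerivAt_rpow_const (Or.inl hx.ne')).div_const (c * (c - 1))).congr_deriv ?_
  field_simp

lemma hasDerivAt_powerPotentialDeriv (c : ℝ) {x : ℝ} (hx : 0 < x) :
    HasDerivAt (powerPotentialDeriv c) (x ^ (c - 2)) x := by
  rcases eq_or_ne c 0 with rfl | hc0
  · have h : powerPotentialDeriv 0 = fun y => -y⁻¹ := by funext y; simp [powerPotentialDeriv]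
    rw [h, zero_sub, rpow_neg hx.le, rpow_two]
    exact (hasDerivAt_inv hx.ne').neg.congr_deriv (neg_neg _)
  rcases eq_or_ne c 1 with rfl | hc1
  · have h : powerPotentialDeriv 1 = fun y => log y + 1 := by
      funext y; simp [powerPotentialDeriv]
    rw [h, show (1 : ℝ) - 2 = -1 by norm_num, rpow_neg_one]
    exact (hasDerivAt_log hx.ne').add_const 1
  have h : powerPotentialDeriv c = fun y => y ^ (c - 1) / (c - 1) := by
    funext y; simp [powerPotentialDeriv, hc0, hc1]
  rw [h]
  refine ((hasDerivAt_rpow_const (p := c - 1) (Or.inl hx.ne')).div_const (c - 1)).congr_deriv ?_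
  rw [sub_sub, one_add_one_eq_two]
  field_simp [sub_ne_zero.2 hc1]

lemma integral_one_sub_mul_eq_of_hasDerivAt {g g' g'' : ℝ → ℝ}
    (hg : ∀ θ ∈ Icc (0 : ℝ) 1, HasDerivAt g (g' θ) θ)
    (hg' : ∀ θ ∈ Icc (0 : ℝ) 1, HasDerivAt g' (g'' θ) θ)
    (hcont : ContinuousOn g'' (Icc 0 1)) :
    ∫ θ in (0 : ℝ)..1, (1 - θ) * g'' θ = g 1 - g 0 - g' 0 := by
  rw [← uIcc_of_le zero_le_one] at hg hg' hcont
  have hderiv : ∀ θ ∈ uIcc (0 : ℝ) 1,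
      HasDerivAt (fun θ => (1 - θ) * g' θ + g θ) ((1 - θ) * g'' θ) θ := fun θ hθ =>
    ((((hasDerivAt_id θ).const_sub 1).mul (hg' θ hθ)).add (hg θ hθ)).congr_deriv (by simp)
  have hint : IntervalIntegrable (fun θ => (1 - θ) * g'' θ) volume 0 1 :=
    ((continuous_const.sub continuous_id).continuousOn.mul hcont).intervalIntegrable
  rw [intervalIntegral.integral_eq_sub_of_hasDerivAt hderiv hint]
  ring

noncomputable def powerBregman (c x m : ℝ) : ℝ :=
  powerPotential c x - powerPotential c m - powerPotentialDeriv c m * (x - m)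

noncomputable def bregmanKernel (c x m θ : ℝ) : ℝ :=
  (1 - θ) * ((m + θ * (x - m)) ^ (c - 2) * (x - m) ^ 2)

lemma segment_pos {x m θ : ℝ} (hx : 0 < x) (hm : 0 < m) (hθ : θ ∈ Icc (0 : ℝ) 1) :
    0 < m + θ * (x - m) := by
  simpa using (convex_Ioi (0 : ℝ)).add_smul_sub_mem hm hx hθ

lemma continuousOn_rpow_segment (c : ℝ) {x m : ℝ} (hx : 0 < x) (hm : 0 < m) :
    ContinuousOn (fun θ => (m + θ * (x - m)) ^ (c - 2) * (x - m) ^ 2) (Icc 0 1) := by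
  refine ContinuousOn.mul ?_ continuousOn_const
  exact (by fun_prop : Continuous fun θ : ℝ => m + θ * (x - m)).continuousOn.rpow_const
    fun θ hθ => Or.inl (segment_pos hx hm hθ).ne'

lemma integral_bregmanKernel (c : ℝ) {x m : ℝ} (hx : 0 < x) (hm : 0 < m) :
    ∫ θ in (0 : ℝ)..1, bregmanKernel c x m θ = powerBregman c x m := by
  have hseg : ∀ θ, HasDerivAt (fun θ : ℝ => m + θ * (x - m)) (x - m) θ := fun θ =>
    (hasDerivAt_mul_const (x - m)).const_add m
  have h := integral_one_sub_mul_eq_of_hasDerivAt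
    (g := fun θ => powerPotential c (m + θ * (x - m)))
    (g' := fun θ => powerPotentialDeriv c (m + θ * (x - m)) * (x - m))
    (g'' := fun θ => (m + θ * (x - m)) ^ (c - 2) * (x - m) ^ 2)
    (fun θ hθ => by exact (hasDerivAt_powerPotential c (segment_pos hx hm hθ)).comp θ (hseg θ))
    (fun θ hθ => (((hasDerivAt_powerPotentialDeriv c (segment_pos hx hm hθ)).comp θ
      (hseg θ)).mul_const (x - m)).congr_deriv (by ring))
    (continuousOn_rpow_segment c hx hm)
  simpa [bregmanKernel, powerBregman] using h

noncomputable def bregmanFactor (p x m θ : ℝ) : ℝ :=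
  (m + θ * (x - m)) ^ (p / 2 - 1) * (x - m) * √(1 - θ)

lemma bregmanFactor_mul_bregmanFactor (p q : ℝ) {x m θ : ℝ} (hx : 0 < x) (hm : 0 < m)
    (hθ : θ ∈ Icc (0 : ℝ) 1) :
    bregmanFactor p x m θ * bregmanFactor q x m θ = bregmanKernel ((p + q) / 2) x m θ := by
  have hT := segment_pos hx hm hθ
  have hpow : (m + θ * (x - m)) ^ (p / 2 - 1) * (m + θ * (x - m)) ^ (q / 2 - 1) =
      (m + θ * (x - m)) ^ ((p + q) / 2 - 2) := by
    rw [← rpow_add hT]; ring_nf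
  have hsqrt : √(1 - θ) * √(1 - θ) = 1 - θ := Real.mul_self_sqrt (sub_nonneg.2 hθ.2)
  calc bregmanFactor p x m θ * bregmanFactor q x m θ
      = ((m + θ * (x - m)) ^ (p / 2 - 1) * (m + θ * (x - m)) ^ (q / 2 - 1)) *
          (x - m) ^ 2 * (√(1 - θ) * √(1 - θ)) := by unfold bregmanFactor; ring
    _ = bregmanKernel ((p + q) / 2) x m θ := by rw [hpow, hsqrt, bregmanKernel]; ring

end PowerPotential

section Moments

open Real Set

variable {Ω : Type*} [MeasurableSpace Ω] {μ : Measure Ω} {X : Ω → ℝ}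

lemma momentLambda_eq_integral_powerPotential_sub (c : ℝ) :
    momentLambda μ X c = ∫ ω, powerPotential c (X ω) ∂μ - powerPotential c (∫ ω, X ω ∂μ) := by
  rcases eq_or_ne c 0 with rfl | hc0
  · simp only [momentLambda, powerPotential, if_true, integral_neg]
    ring
  rcases eq_or_ne c 1 with rfl | hc1
  · simp [momentLambda, powerPotential]
  simp only [momentLambda, powerPotential, hc0, hc1, if_false, integral_div]
  ring

lemma integrable_powerPotential (hmom : ∀ s : ℝ, Integrable (fun ω => X ω ^ s) μ)
    (hlog : Integrable (fun ω => log (X ω)) μ)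
    (hxlog : Integrable (fun ω => X ω * log (X ω)) μ) (c : ℝ) :
    Integrable (fun ω => powerPotential c (X ω)) μ := by
  rcases eq_or_ne c 0 with rfl | hc0
  · simpa [powerPotential] using hlog.neg
  rcases eq_or_ne c 1 with rfl | hc1
  · simpa [powerPotential] using hxlog
  simpa [powerPotential, hc0, hc1] using (hmom c).div_const (c * (c - 1))

lemma integrable_powerBregman [IsFiniteMeasure μ]
    (hmom : ∀ s : ℝ, Integrable (fun ω => X ω ^ s) μ)
    (hlog : Integrable (fun ω => log (X ω)) μ)
    (hxlog : Integrable (fun ω => X ω * log (X ω)) μ) (c m : ℝ) :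
    Integrable (fun ω => powerBregman c (X ω) m) μ := by
  have hX : Integrable X μ := by simpa using hmom 1
  exact ((integrable_powerPotential hmom hlog hxlog c).sub' (integrable_const _)).sub'
    ((hX.sub' (integrable_const m)).const_mul _)

lemma integral_powerBregman [IsProbabilityMeasure μ]
    (hmom : ∀ s : ℝ, Integrable (fun ω => X ω ^ s) μ)
    (hlog : Integrable (fun ω => log (X ω)) μ)
    (hxlog : Integrable (fun ω => X ω * log (X ω)) μ) (c : ℝ) :
    ∫ ω, powerBregman c (X ω) (∫ ω, X ω ∂μ) ∂μ = momentLambda μ X c := by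
  have hX : Integrable X μ := by simpa using hmom 1
  have hφ := integrable_powerPotential hmom hlog hxlog c
  simp only [powerBregman]
  rw [integral_sub (hφ.sub' (integrable_const _)) ((hX.sub' (integrable_const _)).const_mul _),
    integral_sub hφ (integrable_const _), integral_const_mul, integral_sub hX (integrable_const _),
    momentLambda_eq_integral_powerPotential_sub]
  simp

lemma bregmanKernel_nonneg (c : ℝ) {x m θ : ℝ} (hx : 0 < x) (hm : 0 < m)
    (hθ : θ ∈ Icc (0 : ℝ) 1) : 0 ≤ bregmanKernel c x m θ :=
  mul_nonneg (sub_nonneg.2 hθ.2)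
    (mul_nonneg (rpow_nonneg (segment_pos hx hm hθ).le _) (sq_nonneg _))

lemma integrableOn_bregmanKernel (c : ℝ) {x m : ℝ} (hx : 0 < x) (hm : 0 < m) :
    IntegrableOn (bregmanKernel c x m) (Icc 0 1) :=
  ((continuous_const.sub continuous_id).continuousOn.mul
    (continuousOn_rpow_segment c hx hm)).integrableOn_Icc

lemma integral_bregmanKernel_Icc (c : ℝ) {x m : ℝ} (hx : 0 < x) (hm : 0 < m) :
    ∫ θ in Icc 0 1, bregmanKernel c x m θ = powerBregman c x m := by
  rw [integral_Icc_eq_integral_Ioc, ← intervalIntegral.integral_of_le zero_le_one,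
    integral_bregmanKernel c hx hm]

lemma integral_pos_of_ae_pos_s12 [NeZero μ] (hpos : ∀ᵐ ω ∂μ, 0 < X ω)
    (hint : Integrable X μ) : 0 < ∫ ω, X ω ∂μ := by
  refine (integral_pos_iff_support_of_nonneg_ae (hpos.mono fun _ h => h.le) hint).2 ?_
  refine pos_iff_ne_zero.2 fun h => ?_
  obtain ⟨ω, hω, hω0⟩ := (hpos.and (ae_iff.2 h : ∀ᵐ ω ∂μ, X ω = 0)).exists
  exact hω.ne' hω0

lemma ae_pos_fst_and_mem_Icc_snd [SFinite μ] (hpos : ∀ᵐ ω ∂μ, 0 < X ω) :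
    ∀ᵐ z ∂μ.prod (volume.restrict (Icc (0 : ℝ) 1)), 0 < X z.1 ∧ z.2 ∈ Icc 0 1 :=
  (Measure.quasiMeasurePreserving_fst.ae hpos).and
    (Measure.quasiMeasurePreserving_snd.ae (ae_restrict_mem measurableSet_Icc))

variable [IsProbabilityMeasure μ]

lemma integrable_bregmanKernel_prod (hX : Measurable X) (hpos : ∀ᵐ ω ∂μ, 0 < X ω)
    (hmom : ∀ s : ℝ, Integrable (fun ω => X ω ^ s) μ)
    (hlog : Integrable (fun ω => log (X ω)) μ)
    (hxlog : Integrable (fun ω => X ω * log (X ω)) μ) (c : ℝ) :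
    Integrable (fun z : Ω × ℝ => bregmanKernel c (X z.1) (∫ ω, X ω ∂μ) z.2)
      (μ.prod (volume.restrict (Icc 0 1))) := by
  have hm := integral_pos_of_ae_pos_s12 hpos (by simpa using hmom 1)
  refine (integrable_prod_iff (by unfold bregmanKernel; fun_prop)).2 ⟨?_, ?_⟩
  · filter_upwards [hpos] with ω hω using integrableOn_bregmanKernel c hω hm
  · refine (integrable_powerBregman hmom hlog hxlog c (∫ ω, X ω ∂μ)).congr ?_
    filter_upwards [hpos] with ω hω
    rw [← integral_bregmanKernel_Icc c hω hm]
    refine setIntegral_congr_fun measurableSet_Icc fun θ hθ => ?_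
    exact (Real.norm_of_nonneg (bregmanKernel_nonneg c hω hm hθ)).symm

lemma integral_bregmanKernel_prod (hX : Measurable X) (hpos : ∀ᵐ ω ∂μ, 0 < X ω)
    (hmom : ∀ s : ℝ, Integrable (fun ω => X ω ^ s) μ)
    (hlog : Integrable (fun ω => log (X ω)) μ)
    (hxlog : Integrable (fun ω => X ω * log (X ω)) μ) (c : ℝ) :
    ∫ z, bregmanKernel c (X z.1) (∫ ω, X ω ∂μ) z.2 ∂μ.prod (volume.restrict (Icc 0 1)) =
      momentLambda μ X c := by
  have hm := integral_pos_of_ae_pos_s12 hpos (by simpa using hmom 1)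
  rw [integral_prod _ (integrable_bregmanKernel_prod hX hpos hmom hlog hxlog c),
    ← integral_powerBregman hmom hlog hxlog c]
  refine integral_congr_ae ?_
  filter_upwards [hpos] with ω hω using integral_bregmanKernel_Icc c hω hm

theorem exists_inner_eq_momentLambda (hX : Measurable X) (hpos : ∀ᵐ ω ∂μ, 0 < X ω)
    (hmom : ∀ s : ℝ, Integrable (fun ω => X ω ^ s) μ)
    (hlog : Integrable (fun ω => log (X ω)) μ)
    (hxlog : Integrable (fun ω => X ω * log (X ω)) μ) :
    ∃ W : ℝ → Lp ℝ 2 (μ.prod (volume.restrict (Icc (0 : ℝ) 1))),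
      ∀ p q, momentLambda μ X ((p + q) / 2) = ⟪W p, W q⟫ := by
  have hm := integral_pos_of_ae_pos_s12 hpos (by simpa using hmom 1)
  set w : ℝ → Ω × ℝ → ℝ := fun p z => bregmanFactor p (X z.1) (∫ ω, X ω ∂μ) z.2
  have hw : ∀ p q, (fun z => w p z * w q z) =ᵐ[μ.prod (volume.restrict (Icc (0 : ℝ) 1))]
      fun z => bregmanKernel ((p + q) / 2) (X z.1) (∫ ω, X ω ∂μ) z.2 := fun p q => by
    filter_upwards [ae_pos_fst_and_mem_Icc_snd hpos] with z hz
    exact bregmanFactor_mul_bregmanFactor p q hz.1 hm hz.2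
  have hmem : ∀ p, MemLp (w p) 2 (μ.prod (volume.restrict (Icc (0 : ℝ) 1))) := fun p => by
    refine (memLp_two_iff_integrable_sq (by unfold w bregmanFactor; fun_prop)).2 ?_
    refine (integrable_bregmanKernel_prod hX hpos hmom hlog hxlog p).congr ?_
    filter_upwards [hw p p] with z hz
    rw [sq, hz, add_self_div_two]
  refine ⟨fun p => (hmem p).toLp, fun p q => ?_⟩
  rw [L2.inner_def, ← integral_bregmanKernel_prod hX hpos hmom hlog hxlog]
  refine integral_congr_ae ?_
  filter_upwards [(hmem p).coeFn_toLp, (hmem q).coeFn_toLp, hw p q] with z hp hq hpq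
  rw [← hpq, hp, hq, Real.inner_apply, mul_comm]

end Moments

theorem theorem5 {Ω : Type*} [MeasurableSpace Ω] (μ : Measure Ω) [IsProbabilityMeasure μ]
    (X : Ω → ℝ) (hX : Measurable X) (hpos : ∀ᵐ ω ∂μ, 0 < X ω)
    (hmom : ∀ s : ℝ, Integrable (fun ω => X ω ^ s) μ)
    (hlog : Integrable (fun ω => Real.log (X ω)) μ)
    (hxlog : Integrable (fun ω => X ω * Real.log (X ω)) μ)
    (r s u v : ℝ) :
    momentPhi μ X r s s u * momentPhi μ X r s s v ≥
      (momentXi μ X (r) (s) * (momentXi μ X (s) ((u + v) / 2) - momentXi μ X ((s + u) / 2) ((s + v) / 2)) -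
        (momentXi μ X (s) ((r + u) / 2) - momentXi μ X ((r + s) / 2) ((s + u) / 2)) *
          (momentXi μ X (s) ((r + v) / 2) - momentXi μ X ((r + s) / 2) ((s + v) / 2))) ^ 2 := by
  obtain ⟨W, hW⟩ := exists_inner_eq_momentLambda hX hpos hmom hlog hxlog
  exact momentPhi_mul_momentPhi_ge_of_inner μ X W hW r s u v
end
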